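/- Let d ≥ 1, τ ∈ [0,1], f, g ∈ 𝒮(ℝ^d), and 1 ≤ j ≤ d. Then for all (x,ξ) ∈ ℝ^{2d}: W_τ(D_{x_j} f, g)(x,ξ) = 2πξ_j · W_τ(f,g)(x,ξ) − i(1−τ) ∂_{x_j} W_τ(f,g)(x,ξ), where D_{x_j} f = −i ∂_j f. Equivalently, W_τ(D_{x_j} f, g) = (2πξ_j + (1−τ) D_{x_j}) W_τ(f,g) with D = −i∂. -/

import Mathlib

open MeasureTheory Complex Real ComplexConjugate
open scoped RealInnerProductSpace ENNReal NNReal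
open FourierTransform

noncomputable section

abbrev Ed (d : ℕ) := EuclideanSpace ℝ (Fin d)

/-- cross-τ-Wigner distribution. -/
def Wtau {d : ℕ} (τ : ℝ) (f g : Ed d → ℂ) (x ξ : Ed d) : ℂ :=
  ∫ t : Ed d, Complex.exp (-(2 * π * Complex.I) * (⟪t, ξ⟫ : ℝ)) * f (x + τ • t) *
    conj (g (x - (1 - τ) • t))



lemma schwartz_decay {d : ℕ} {V : Type*} [NormedAddCommGroup V] [NormedSpace ℝ V]
    (F : SchwartzMap (Ed d) V) :
    ∃ C : ℝ, 0 ≤ C ∧ ∀ u : Ed d, ‖F u‖ ≤ C * (1 + ‖u‖) ^ (-(d + 1 : ℝ)) := by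
  refine ⟨2 ^ (d + 1) *
    (Finset.Iic ((d+1, 0) : ℕ × ℕ)).sup (fun m => SchwartzMap.seminorm ℝ m.1 m.2) F, ?_, ?_⟩
  · positivity
  · intro u
    have h := SchwartzMap.one_add_le_sup_seminorm_apply (𝕜 := ℝ) (m := (d+1, 0))
      le_rfl le_rfl F u
    rw [norm_iteratedFDeriv_zero] at h
    have hpos : (0:ℝ) < 1 + ‖u‖ := by positivity
    have hrw : (1 + ‖u‖) ^ (-(d + 1 : ℝ)) = ((1 + ‖u‖) ^ (d + 1 : ℕ))⁻¹ := by
      rw [Real.rpow_neg hpos.le]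
      norm_cast
    rw [hrw, ← div_eq_mul_inv, le_div_iff₀ (by positivity)]
    calc ‖F u‖ * (1 + ‖u‖) ^ (d + 1) = (1 + ‖u‖) ^ (d + 1) * ‖F u‖ := by ring
    _ ≤ _ := h

lemma prod_decay {d : ℕ} {V W : Type*} [NormedAddCommGroup V] [NormedSpace ℝ V]
    [NormedAddCommGroup W] [NormedSpace ℝ W]
    (F : SchwartzMap (Ed d) V) (G : SchwartzMap (Ed d) W) :
    ∃ C : ℝ, 0 ≤ C ∧ ∀ u v : Ed d,
      ‖F u‖ * ‖G v‖ ≤ C * (1 + ‖u - v‖) ^ (-(d + 1 : ℝ)) := by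
  obtain ⟨C₁, hC₁, h₁⟩ := schwartz_decay F
  obtain ⟨C₂, hC₂, h₂⟩ := schwartz_decay G
  refine ⟨C₁ * C₂, by positivity, fun u v => ?_⟩
  have hu : (0:ℝ) < 1 + ‖u‖ := by positivity
  have hv : (0:ℝ) < 1 + ‖v‖ := by positivity
  have huv : (0:ℝ) < 1 + ‖u - v‖ := by positivity
  have key : (1 + ‖u‖) ^ (-(d + 1 : ℝ)) * (1 + ‖v‖) ^ (-(d + 1 : ℝ))
      ≤ (1 + ‖u - v‖) ^ (-(d + 1 : ℝ)) := by
    rw [← Real.mul_rpow hu.le hv.le]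
    apply Real.rpow_le_rpow_of_nonpos huv
    · have h3 : ‖u - v‖ ≤ ‖u‖ + ‖v‖ := norm_sub_le u v
      nlinarith [norm_nonneg u, norm_nonneg v]
    · exact neg_nonpos.mpr (by positivity)
  calc ‖F u‖ * ‖G v‖ ≤ (C₁ * (1 + ‖u‖) ^ (-(d + 1 : ℝ))) * (C₂ * (1 + ‖v‖) ^ (-(d + 1 : ℝ))) := by
        apply mul_le_mul (h₁ u) (h₂ v) (norm_nonneg _)
        positivity
    _ = (C₁ * C₂) * ((1 + ‖u‖) ^ (-(d + 1 : ℝ)) * (1 + ‖v‖) ^ (-(d + 1 : ℝ))) := by ring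
    _ ≤ _ := by
        apply mul_le_mul_of_nonneg_left key
        positivity

lemma integrable_japanese {d : ℕ} :
    Integrable (fun t : Ed d => (1 + ‖t‖) ^ (-(d + 1 : ℝ))) := by
  apply integrable_one_add_norm
  rw [finrank_euclideanSpace, Fintype.card_fin]
  exact lt_add_one _

lemma integrable_of_decay {d : ℕ} {V : Type*} [NormedAddCommGroup V]
    {h : Ed d → V} (hc : Continuous h) (C : ℝ)
    (hb : ∀ t, ‖h t‖ ≤ C * (1 + ‖t‖) ^ (-(d + 1 : ℝ))) : Integrable h :=
  Integrable.mono' (integrable_japanese.const_mul C) hc.aestronglyMeasurable (ae_of_all _ hb)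

lemma arg_sub {d : ℕ} (τ : ℝ) (x t : Ed d) : (x + τ • t) - (x - (1 - τ) • t) = t := by
  rw [sub_smul, one_smul]
  abel

lemma ker_eq (r : ℝ) : (𝐞 (-r) : ℂ) = Complex.exp (-(2 * π * Complex.I) * (r : ℂ)) := by
  rw [Real.fourierChar_apply]
  congr 1
  push_cast
  ring

lemma ker_norm (r : ℝ) : ‖Complex.exp (-(2 * π * Complex.I) * (r : ℂ))‖ = 1 := by
  rw [Complex.norm_exp]
  have : (-(2 * π * Complex.I) * (r : ℂ)).re = 0 := by simp
  rw [this, Real.exp_zero]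

lemma ker_continuous {d : ℕ} (ξ : Ed d) :
    Continuous (fun t : Ed d => Complex.exp (-(2 * π * Complex.I) * ((⟪t, ξ⟫ : ℝ) : ℂ))) :=
  Complex.continuous_exp.comp (continuous_const.mul
    (Complex.continuous_ofReal.comp (continuous_id.inner continuous_const)))

lemma integrable_ker {d : ℕ} (τ : ℝ) (x ξ : Ed d) (F G : SchwartzMap (Ed d) ℂ) :
    Integrable (fun t : Ed d => Complex.exp (-(2 * π * Complex.I) * ((⟪t, ξ⟫ : ℝ) : ℂ)) *
      F (x + τ • t) * conj (G (x - (1 - τ) • t))) := by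
  obtain ⟨C, hC, hb⟩ := prod_decay F G
  apply integrable_of_decay ?_ C
  · intro t
    rw [norm_mul, norm_mul, ker_norm, one_mul, RCLike.norm_conj]
    have := hb (x + τ • t) (x - (1 - τ) • t)
    rwa [arg_sub] at this
  · exact ((ker_continuous ξ).mul (F.continuous.comp (by fun_prop))).mul
      (Complex.continuous_conj.comp (G.continuous.comp (by fun_prop)))

abbrev conjL : ℂ →L[ℝ] ℂ := Complex.conjCLE.toContinuousLinearMap

lemma conjL_apply (z : ℂ) : conjL z = conj z := rfl

lemma norm_conjL_comp {d : ℕ} (L : Ed d →L[ℝ] ℂ) : ‖conjL.comp L‖ ≤ ‖L‖ := by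
  apply ContinuousLinearMap.opNorm_le_bound _ (norm_nonneg L)
  intro w
  rw [ContinuousLinearMap.comp_apply, conjL_apply, RCLike.norm_conj]
  exact L.le_opNorm w

lemma integrable_prod {d : ℕ} (τ : ℝ) (x : Ed d) (F G : SchwartzMap (Ed d) ℂ) :
    Integrable (fun t : Ed d => F (x + τ • t) * conj (G (x - (1 - τ) • t))) := by
  obtain ⟨C, hC, hb⟩ := prod_decay F G
  apply integrable_of_decay ?_ C
  · intro t
    rw [norm_mul, RCLike.norm_conj]
    have := hb (x + τ • t) (x - (1 - τ) • t)
    rwa [arg_sub] at this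
  · exact (F.continuous.comp (by fun_prop)).mul
      (Complex.continuous_conj.comp (G.continuous.comp (by fun_prop)))

lemma Wtau_eq_fourier {d : ℕ} (τ : ℝ) (F G : Ed d → ℂ) (x ξ : Ed d) :
    Wtau τ F G x ξ =
      𝓕 (fun t => F (x + τ • t) * conj (G (x - (1 - τ) • t))) ξ := by
  rw [Real.fourier_eq]
  unfold Wtau
  congr 1
  funext t
  rw [Circle.smul_def, ker_eq, mul_assoc, smul_eq_mul]

lemma conjL_hasFDerivAt {z : ℂ} : HasFDerivAt (fun w : ℂ => conj w) conjL z :=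
  conjL.hasFDerivAt

lemma hasF_part {d : ℕ} (τ : ℝ) (x : Ed d) (f : SchwartzMap (Ed d) ℂ) (t : Ed d) :
    HasFDerivAt (fun s : Ed d => f (x + τ • s)) (τ • fderiv ℝ f (x + τ • t)) t := by
  have hm : HasFDerivAt (fun s : Ed d => x + τ • s)
      (τ • ContinuousLinearMap.id ℝ (Ed d)) t :=
    ((hasFDerivAt_id t).const_smul τ).const_add x
  have h0 := (f.differentiable (x + τ • t)).hasFDerivAt.comp t hm
  refine h0.congr_fderiv ?_
  ext w
  simp

lemma hasG_part {d : ℕ} (τ : ℝ) (x : Ed d) (g : SchwartzMap (Ed d) ℂ) (t : Ed d) :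
    HasFDerivAt (fun s : Ed d => conj (g (x - (1 - τ) • s)))
      ((-(1 - τ)) • (conjL.comp (fderiv ℝ g (x - (1 - τ) • t)))) t := by
  have hm : HasFDerivAt (fun s : Ed d => x - (1 - τ) • s)
      (-((1 - τ) • ContinuousLinearMap.id ℝ (Ed d))) t :=
    ((hasFDerivAt_id t).const_smul (1 - τ)).const_sub x
  have h0 := (g.differentiable (x - (1 - τ) • t)).hasFDerivAt.comp t hm
  have h1 := conjL_hasFDerivAt.comp t h0
  refine h1.congr_fderiv ?_
  ext w
  simp
  ring

lemma hasD {d : ℕ} (τ : ℝ) (x : Ed d) (f g : SchwartzMap (Ed d) ℂ) (t : Ed d) :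
    HasFDerivAt (fun s : Ed d => f (x + τ • s) * conj (g (x - (1 - τ) • s)))
      (f (x + τ • t) • ((-(1 - τ)) • (conjL.comp (fderiv ℝ g (x - (1 - τ) • t)))) +
        conj (g (x - (1 - τ) • t)) • (τ • fderiv ℝ f (x + τ • t))) t :=
  (hasF_part τ x f t).mul (hasG_part τ x g t)

lemma hasFx_part {d : ℕ} (τ : ℝ) (t : Ed d) (f : SchwartzMap (Ed d) ℂ) (x : Ed d) :
    HasFDerivAt (fun x' : Ed d => f (x' + τ • t)) (fderiv ℝ f (x + τ • t)) x := by
  have hm : HasFDerivAt (fun x' : Ed d => x' + τ • t)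
      (ContinuousLinearMap.id ℝ (Ed d)) x := (hasFDerivAt_id x).add_const (τ • t)
  have h0 := (f.differentiable (x + τ • t)).hasFDerivAt.comp x hm
  exact h0.congr_fderiv (by ext w; simp)

lemma hasGx_part {d : ℕ} (τ : ℝ) (t : Ed d) (g : SchwartzMap (Ed d) ℂ) (x : Ed d) :
    HasFDerivAt (fun x' : Ed d => conj (g (x' - (1 - τ) • t)))
      (conjL.comp (fderiv ℝ g (x - (1 - τ) • t))) x := by
  have hm : HasFDerivAt (fun x' : Ed d => x' - (1 - τ) • t)
      (ContinuousLinearMap.id ℝ (Ed d)) x := (hasFDerivAt_id x).sub_const ((1 - τ) • t)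
  have h0 := (g.differentiable (x - (1 - τ) • t)).hasFDerivAt.comp x hm
  have h1 := conjL_hasFDerivAt.comp x h0
  exact h1.congr_fderiv (by ext w; simp)

lemma hasDx {d : ℕ} (τ : ℝ) (t : Ed d) (f g : SchwartzMap (Ed d) ℂ) (x : Ed d) :
    HasFDerivAt (fun x' : Ed d => f (x' + τ • t) * conj (g (x' - (1 - τ) • t)))
      (f (x + τ • t) • (conjL.comp (fderiv ℝ g (x - (1 - τ) • t))) +
        conj (g (x - (1 - τ) • t)) • fderiv ℝ f (x + τ • t)) x :=
  (hasFx_part τ t f x).mul (hasGx_part τ t g x)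

lemma cont_fderiv {d : ℕ} (f : SchwartzMap (Ed d) ℂ) {m : Ed d → Ed d} (hm : Continuous m) :
    Continuous fun t => fderiv ℝ f (m t) := by
  have h := ((SchwartzMap.fderivCLM ℝ (Ed d) ℂ f).continuous).comp hm
  simpa only [SchwartzMap.fderivCLM_apply, Function.comp_def] using h

lemma cont_conjL_fderiv {d : ℕ} (g : SchwartzMap (Ed d) ℂ) {m : Ed d → Ed d}
    (hm : Continuous m) : Continuous fun t => conjL.comp (fderiv ℝ g (m t)) := by
  have h := ((ContinuousLinearMap.compL ℝ (Ed d) ℂ ℂ conjL).continuous).comp (cont_fderiv g hm)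
  simpa only [Function.comp_def, ContinuousLinearMap.compL_apply] using h

lemma P_norm_le {d : ℕ} (τ a b : ℝ) (f g : SchwartzMap (Ed d) ℂ) :
    ∃ C : ℝ, 0 ≤ C ∧ ∀ x' t : Ed d,
      ‖f (x' + τ • t) • (b • (conjL.comp (fderiv ℝ g (x' - (1 - τ) • t)))) +
        conj (g (x' - (1 - τ) • t)) • (a • fderiv ℝ f (x' + τ • t))‖ ≤
      (|b| + |a|) * C * (1 + ‖t‖) ^ (-(d + 1 : ℝ)) ∧
      0 ≤ (1 + ‖t‖) ^ (-(d + 1 : ℝ)) := by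
  obtain ⟨C₁, hC₁, hb₁⟩ := prod_decay (SchwartzMap.fderivCLM ℝ (Ed d) ℂ f) g
  obtain ⟨C₂, hC₂, hb₂⟩ := prod_decay f (SchwartzMap.fderivCLM ℝ (Ed d) ℂ g)
  refine ⟨C₁ + C₂, by positivity, fun x' t => ⟨?_, by positivity⟩⟩
  have key : (x' + τ • t) - (x' - (1 - τ) • t) = t := arg_sub τ x' t
  have h₁ := hb₁ (x' + τ • t) (x' - (1 - τ) • t)
  have h₂ := hb₂ (x' + τ • t) (x' - (1 - τ) • t)
  rw [key] at h₁ h₂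
  rw [SchwartzMap.fderivCLM_apply] at h₁ h₂
  have hr : (0:ℝ) ≤ (1 + ‖t‖) ^ (-(d + 1 : ℝ)) := by positivity
  have e1 : ‖f (x' + τ • t) • (b • (conjL.comp (fderiv ℝ g (x' - (1 - τ) • t))))‖ ≤
      |b| * (C₂ * (1 + ‖t‖) ^ (-(d + 1 : ℝ))) := by
    rw [norm_smul (f (x' + τ • t)) (b • (conjL.comp (fderiv ℝ g (x' - (1 - τ) • t)))),
      norm_smul b (conjL.comp (fderiv ℝ g (x' - (1 - τ) • t))), Real.norm_eq_abs]
    calc ‖f (x' + τ • t)‖ * (|b| * ‖conjL.comp (fderiv ℝ g (x' - (1 - τ) • t))‖)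
        ≤ ‖f (x' + τ • t)‖ * (|b| * ‖fderiv ℝ g (x' - (1 - τ) • t)‖) := by
          gcongr
          exact norm_conjL_comp _
      _ = |b| * (‖f (x' + τ • t)‖ * ‖fderiv ℝ g (x' - (1 - τ) • t)‖) := by ring
      _ ≤ |b| * (C₂ * (1 + ‖t‖) ^ (-(d + 1 : ℝ))) := by
          gcongr
  have e2 : ‖conj (g (x' - (1 - τ) • t)) • (a • fderiv ℝ f (x' + τ • t))‖ ≤
      |a| * (C₁ * (1 + ‖t‖) ^ (-(d + 1 : ℝ))) := by
    rw [norm_smul (conj (g (x' - (1 - τ) • t))) (a • fderiv ℝ f (x' + τ • t)),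
      norm_smul a (fderiv ℝ f (x' + τ • t)), Real.norm_eq_abs, RCLike.norm_conj]
    calc ‖g (x' - (1 - τ) • t)‖ * (|a| * ‖fderiv ℝ f (x' + τ • t)‖)
        = |a| * (‖fderiv ℝ f (x' + τ • t)‖ * ‖g (x' - (1 - τ) • t)‖) := by ring
      _ ≤ |a| * (C₁ * (1 + ‖t‖) ^ (-(d + 1 : ℝ))) := by
          gcongr
  calc ‖_ + _‖ ≤ _ + _ := norm_add_le _ _
    _ ≤ |b| * (C₂ * (1 + ‖t‖) ^ (-(d + 1 : ℝ))) + |a| * (C₁ * (1 + ‖t‖) ^ (-(d + 1 : ℝ))) :=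
        add_le_add e1 e2
    _ ≤ (|b| + |a|) * (C₁ + C₂) * (1 + ‖t‖) ^ (-(d + 1 : ℝ)) := by
        have hkey : |b| * C₂ + |a| * C₁ ≤ (|b| + |a|) * (C₁ + C₂) := by
          nlinarith [abs_nonneg a, abs_nonneg b]
        nlinarith [mul_le_mul_of_nonneg_right hkey hr]

lemma P_continuous {d : ℕ} (τ a b : ℝ) (x : Ed d) (f g : SchwartzMap (Ed d) ℂ) :
    Continuous (fun t : Ed d =>
      f (x + τ • t) • (b • (conjL.comp (fderiv ℝ g (x - (1 - τ) • t)))) +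
        conj (g (x - (1 - τ) • t)) • (a • fderiv ℝ f (x + τ • t))) := by
  have hm1 : Continuous (fun t : Ed d => x + τ • t) := by fun_prop
  have hm2 : Continuous (fun t : Ed d => x - (1 - τ) • t) := by fun_prop
  exact ((f.continuous.comp hm1).smul ((cont_conjL_fderiv g hm2).const_smul b)).add
    ((Complex.continuous_conj.comp (g.continuous.comp hm2)).smul
      ((cont_fderiv f hm1).const_smul a))

lemma integrable_P {d : ℕ} (τ a b : ℝ) (x ξ : Ed d) (f g : SchwartzMap (Ed d) ℂ) :
    Integrable (fun t : Ed d => Complex.exp (-(2 * π * Complex.I) * ((⟪t, ξ⟫ : ℝ) : ℂ)) •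
      (f (x + τ • t) • (b • (conjL.comp (fderiv ℝ g (x - (1 - τ) • t)))) +
        conj (g (x - (1 - τ) • t)) • (a • fderiv ℝ f (x + τ • t)))) := by
  obtain ⟨C, hC, hb⟩ := P_norm_le τ a b f g
  apply integrable_of_decay ((ker_continuous ξ).smul (P_continuous τ a b x f g)) ((|b| + |a|) * C)
  intro t
  rw [Pi.smul_apply']
  rw [norm_smul (Complex.exp (-(2 * π * Complex.I) * ((⟪t, ξ⟫ : ℝ) : ℂ)))
    (f (x + τ • t) • (b • (conjL.comp (fderiv ℝ g (x - (1 - τ) • t)))) +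
        conj (g (x - (1 - τ) • t)) • (a • fderiv ℝ f (x + τ • t))), ker_norm, one_mul]
  exact (hb x t).1

lemma integrable_P' {d : ℕ} (τ a b : ℝ) (x : Ed d) (f g : SchwartzMap (Ed d) ℂ) :
    Integrable (fun t : Ed d =>
      f (x + τ • t) • (b • (conjL.comp (fderiv ℝ g (x - (1 - τ) • t)))) +
        conj (g (x - (1 - τ) • t)) • (a • fderiv ℝ f (x + τ • t))) := by
  obtain ⟨C, hC, hb⟩ := P_norm_le τ a b f g
  apply integrable_of_decay (P_continuous τ a b x f g) ((|b| + |a|) * C)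
  intro t
  exact (hb x t).1

lemma lhs_eq {d : ℕ} (τ : ℝ) (x ξ : Ed d) (f g : SchwartzMap (Ed d) ℂ) (j : Fin d) :
    Wtau τ (fun t => -Complex.I * fderiv ℝ (⇑f) t (EuclideanSpace.single j 1)) (⇑g) x ξ =
      -Complex.I *
        Wtau τ (⇑(LineDeriv.lineDerivOp (EuclideanSpace.single j (1:ℝ)) f)) (⇑g) x ξ := by
  unfold Wtau
  rw [← integral_const_mul]
  congr 1
  funext t
  rw [SchwartzMap.lineDerivOp_apply_eq_fderiv]
  ring

lemma eqII {d : ℕ} (τ : ℝ) (x ξ : Ed d) (f g : SchwartzMap (Ed d) ℂ) (j : Fin d) :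
    fderiv ℝ (fun x' => Wtau τ (⇑f) (⇑g) x' ξ) x (EuclideanSpace.single j 1) =
      Wtau τ (⇑(LineDeriv.lineDerivOp (EuclideanSpace.single j (1:ℝ)) f)) (⇑g) x ξ +
      Wtau τ (⇑f) (⇑(LineDeriv.lineDerivOp (EuclideanSpace.single j (1:ℝ)) g)) x ξ := by
  obtain ⟨C, hC, hPb⟩ := P_norm_le (d := d) τ 1 1 f g
  set ej : Ed d := EuclideanSpace.single j 1 with hej
  set e : Ed d → ℂ := fun t => Complex.exp (-(2 * π * Complex.I) * ((⟪t, ξ⟫ : ℝ) : ℂ)) with he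
  set F' : Ed d → Ed d → (Ed d →L[ℝ] ℂ) := fun x' t => e t •
    (f (x' + τ • t) • ((1:ℝ) • (conjL.comp (fderiv ℝ g (x' - (1 - τ) • t)))) +
      conj (g (x' - (1 - τ) • t)) • ((1:ℝ) • fderiv ℝ f (x' + τ • t))) with hF'
  have hmain : HasFDerivAt
      (fun x' => ∫ t : Ed d, e t * f (x' + τ • t) * conj (g (x' - (1 - τ) • t)))
      (∫ t : Ed d, F' x t) x := by
    apply hasFDerivAt_integral_of_dominated_of_fderiv_le (hs := Metric.ball_mem_nhds _ one_pos)
      (bound := fun t => (|(1:ℝ)| + |(1:ℝ)|) * C * (1 + ‖t‖) ^ (-(d + 1 : ℝ)))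
    · exact Filter.Eventually.of_forall fun x' =>
        (integrable_ker τ x' ξ f g).aestronglyMeasurable
    · exact integrable_ker τ x ξ f g
    · exact (integrable_P τ 1 1 x ξ f g).aestronglyMeasurable
    · refine ae_of_all _ fun t x' _ => ?_
      rw [hF']
      rw [norm_smul (e t) (f (x' + τ • t) • ((1:ℝ) • (conjL.comp (fderiv ℝ g (x' - (1 - τ) • t)))) +
        conj (g (x' - (1 - τ) • t)) • ((1:ℝ) • fderiv ℝ f (x' + τ • t))), he, ker_norm, one_mul]
      exact (hPb x' t).1
    · exact integrable_japanese.const_mul _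
    · refine ae_of_all _ fun t x' _ => ?_
      have h0 := (hasDx τ t f g x').const_mul (e t)
      rw [hF']
      simp only [one_smul]
      simp only [← mul_assoc] at h0
      exact h0
  have h2 : HasFDerivAt (fun x' => Wtau τ (⇑f) (⇑g) x' ξ) (∫ t : Ed d, F' x t) x := hmain
  rw [h2.fderiv, ContinuousLinearMap.integral_apply (integrable_P τ 1 1 x ξ f g) ej]
  have hptw : ∀ t : Ed d, F' x t ej =
      e t * (LineDeriv.lineDerivOp ej f) (x + τ • t) * conj (g (x - (1 - τ) • t)) +
      e t * f (x + τ • t) * conj ((LineDeriv.lineDerivOp ej g) (x - (1 - τ) • t)) := by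
    intro t
    rw [hF']
    simp only [one_smul, ContinuousLinearMap.smul_apply, ContinuousLinearMap.add_apply,
      ContinuousLinearMap.comp_apply, SchwartzMap.lineDerivOp_apply_eq_fderiv, conjL_apply, smul_eq_mul]
    ring
  rw [integral_congr_ae (ae_of_all _ hptw),
    integral_add (integrable_ker τ x ξ (LineDeriv.lineDerivOp ej f) g)
      (integrable_ker τ x ξ f (LineDeriv.lineDerivOp ej g))]
  rfl

lemma eqI {d : ℕ} (τ : ℝ) (x ξ : Ed d) (f g : SchwartzMap (Ed d) ℂ) (j : Fin d) :
    (τ : ℂ) * Wtau τ (⇑(LineDeriv.lineDerivOp (EuclideanSpace.single j (1:ℝ)) f)) (⇑g) x ξ -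
      ((1 : ℂ) - (τ : ℂ)) *
        Wtau τ (⇑f) (⇑(LineDeriv.lineDerivOp (EuclideanSpace.single j (1:ℝ)) g)) x ξ =
      2 * (π : ℂ) * Complex.I * ((ξ j : ℝ) : ℂ) * Wtau τ (⇑f) (⇑g) x ξ := by
  set ej : Ed d := EuclideanSpace.single j 1 with hej
  set e : Ed d → ℂ := fun t => Complex.exp (-(2 * π * Complex.I) * ((⟪t, ξ⟫ : ℝ) : ℂ)) with he
  set φ : Ed d → ℂ := fun t => f (x + τ • t) * conj (g (x - (1 - τ) • t)) with hφ
  have hInt : Integrable φ := integrable_prod τ x f g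
  have hDiff : Differentiable ℝ φ := fun t => (hasD τ x f g t).differentiableAt
  have hfd : ∀ t, fderiv ℝ φ t =
      f (x + τ • t) • ((-(1 - τ)) • (conjL.comp (fderiv ℝ g (x - (1 - τ) • t)))) +
        conj (g (x - (1 - τ) • t)) • (τ • fderiv ℝ f (x + τ • t)) :=
    fun t => (hasD τ x f g t).fderiv
  have hIntD : Integrable (fderiv ℝ φ) := by
    have hfun : fderiv ℝ φ = fun t =>
        f (x + τ • t) • ((-(1 - τ)) • (conjL.comp (fderiv ℝ g (x - (1 - τ) • t)))) +
          conj (g (x - (1 - τ) • t)) • (τ • fderiv ℝ f (x + τ • t)) := funext hfd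
    rw [hfun]
    exact integrable_P' τ τ (-(1 - τ)) x f g
  have key := Real.fourier_fderiv hInt hDiff hIntD
  have hkey := congrArg (fun L : (Ed d →L[ℝ] ℂ) => L ej) (congrFun key ξ)
  rw [Real.fourier_continuousLinearMap_apply hIntD] at hkey
  have hL : 𝓕 (fun t => fderiv ℝ φ t ej) ξ =
      (τ : ℂ) * Wtau τ (⇑(LineDeriv.lineDerivOp ej f)) (⇑g) x ξ +
      (-(1 - (τ : ℂ))) * Wtau τ (⇑f) (⇑(LineDeriv.lineDerivOp ej g)) x ξ := by
    rw [Real.fourier_eq]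
    have hptw : ∀ t : Ed d, (𝐞 (-(⟪t, ξ⟫ : ℝ)) : Circle) • (fderiv ℝ φ t ej) =
        (τ : ℂ) * (e t * (LineDeriv.lineDerivOp ej f) (x + τ • t) *
          conj (g (x - (1 - τ) • t))) +
        (-(1 - (τ : ℂ))) * (e t * f (x + τ • t) *
          conj ((LineDeriv.lineDerivOp ej g) (x - (1 - τ) • t))) := by
      intro t
      rw [Circle.smul_def, ker_eq, hfd t]
      simp only [ContinuousLinearMap.add_apply, ContinuousLinearMap.smul_apply,
        ContinuousLinearMap.comp_apply, SchwartzMap.lineDerivOp_apply_eq_fderiv, conjL_apply,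
        smul_eq_mul, Complex.real_smul, he]
      push_cast
      ring
    rw [integral_congr_ae (ae_of_all _ hptw),
      integral_add ((integrable_ker τ x ξ (LineDeriv.lineDerivOp ej f) g).const_mul _)
        ((integrable_ker τ x ξ f (LineDeriv.lineDerivOp ej g)).const_mul _),
      integral_const_mul, integral_const_mul]
    rfl
  have hR : VectorFourier.fourierSMulRight (-innerSL ℝ) (𝓕 φ) ξ ej =
      2 * (π : ℂ) * Complex.I * ((ξ j : ℝ) : ℂ) * Wtau τ (⇑f) (⇑g) x ξ := by
    rw [VectorFourier.fourierSMulRight_apply]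
    have hinner : (-innerSL ℝ (E := Ed d)) ξ ej = -(ξ j) := by
      simp only [ContinuousLinearMap.neg_apply, innerSL_apply_apply, neg_inj]
      rw [hej]
      rw [EuclideanSpace.inner_single_right]
      simp
    rw [hinner, ← Wtau_eq_fourier]
    rw [Complex.real_smul]
    push_cast
    rw [smul_eq_mul]
    ring
  rw [hL, hR] at hkey
  linear_combination hkey

/-- `W_τ(D_{x_j} f, g) = 2πξ_j W_τ(f,g) − i(1−τ) ∂_{x_j} W_τ(f,g)`,
where `D_{x_j} f = −i ∂_j f`. -/
theorem stmt12 (d : ℕ) (hd : 1 ≤ d) (τ : ℝ) (hτ : τ ∈ Set.Icc (0:ℝ) 1)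
    (f g : SchwartzMap (Ed d) ℂ) (j : Fin d) (x ξ : Ed d) :
    Wtau τ (fun t => -Complex.I * fderiv ℝ (⇑f) t (EuclideanSpace.single j 1)) (⇑g) x ξ =
      (2 * π * (ξ j) : ℝ) * Wtau τ (⇑f) (⇑g) x ξ -
        Complex.I * ((1 : ℝ) - τ) *
          fderiv ℝ (fun x' => Wtau τ (⇑f) (⇑g) x' ξ) x (EuclideanSpace.single j 1) := by
  rw [lhs_eq τ x ξ f g j, eqII τ x ξ f g j]
  have h1 := eqI τ x ξ f g j
  push_cast
  linear_combination (-Complex.I) * h1 +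
    (-2 * (π : ℂ) * ((ξ j : ℝ) : ℂ) * Wtau τ (⇑f) (⇑g) x ξ) * Complex.I_sq
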